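/- arXiv:1904.09492 — 6 statements merged into one kernel-verified Lean document; each statement's English description precedes it below -/
import Mathlib

section
/- A finite nonempty intersection of S-nice subalgebras of A is an S-nice subalgebra of A. -/
/-- `R` is an `S`-nice subalgebra of `A`: `R ∩ F = S` and `F·R = A`. -/
def IsNice {F A : Type*} [Field F] [Ring A] [Algebra F A] (S : Subring F) (R : Subring A) : Prop :=
  (∀ x : F, algebraMap F A x ∈ R ↔ x ∈ S) ∧ Submodule.span F (R : Set A) = ⊤

theorem stmt1 {F A : Type*} [Field F] [Ring A] [Algebra F A] (S : Subring F)
    [IsFractionRing S F]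
    {ι : Type*} [Fintype ι] [Nonempty ι] (R : ι → Subring A)
    (h : ∀ i, IsNice S (R i)) : IsNice S (⨅ i, R i) := by
  -- multiplying an element of `R i` by the image of `s : S` stays in `R i`
  have key : ∀ i (s : S) (x : A), x ∈ R i → ((s : F)) • x ∈ R i := by
    intro i s x hx
    rw [Algebra.smul_def]
    exact mul_mem (((h i).1 _).mpr s.2) hx
  constructor
  · intro x
    simp only [Subring.mem_iInf]
    exact ⟨fun hx => ((h (Classical.arbitrary ι)).1 x).mp (hx _),
      fun hx i => ((h i).1 x).mpr hx⟩
  · rw [eq_top_iff]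
    intro a ha'
    clear ha'
    classical
    -- for each i, clear denominators
    have step : ∀ i, ∃ s : S, s ≠ 0 ∧ ((s : F)) • a ∈ R i := by
      intro i
      have ha : a ∈ Submodule.span F ((R i : Set A)) := (h i).2 ▸ Submodule.mem_top
      induction ha using Submodule.span_induction with
      | mem x hx => exact ⟨1, one_ne_zero, by simpa using hx⟩
      | zero => exact ⟨1, one_ne_zero, by simpa using zero_mem (R i)⟩
      | add x y _ _ hx hy =>
        obtain ⟨s, hs, hsx⟩ := hx
        obtain ⟨t, ht, hty⟩ := hy
        refine ⟨s * t, mul_ne_zero hs ht, ?_⟩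
        have : ((s * t : S) : F) • (x + y) = ((t : F)) • (((s : F)) • x) + ((s : F)) • (((t : F)) • y) := by
          push_cast; rw [smul_add]; rw [smul_smul, smul_smul, mul_comm]
        rw [this]
        exact add_mem (key i t _ hsx) (key i s _ hty)
      | smul c x _ hx =>
        obtain ⟨s, hs, hsx⟩ := hx
        obtain ⟨⟨n, d⟩, hd⟩ := IsLocalization.surj (nonZeroDivisors S) c
        simp only at hd
        rw [show algebraMap S F (d : S) = ((d : S) : F) from rfl,
          show algebraMap S F n = ((n : F)) from rfl] at hd
        refine ⟨s * d, mul_ne_zero hs (nonZeroDivisors.ne_zero d.2), ?_⟩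
        have : ((s * (d : S) : S) : F) • (c • x) = ((n : F)) • (((s : F)) • x) := by
          push_cast
          rw [smul_smul, smul_smul]
          congr 1
          calc (s : F) * (d : S) * c = (s : F) * ((c * ((d : S) : F))) := by ring
            _ = (n : F) * (s : F) := by rw [hd]; ring
        rw [this]
        exact key i n _ hsx
    choose s hs0 hsR using step
    set t : S := ∏ i, s i with ht
    have ht0 : (t : F) ≠ 0 := fun hc =>
      (Finset.prod_ne_zero_iff.mpr fun i _ => hs0 i) (by exact_mod_cast hc)
    have htR : ((t : F)) • a ∈ ⨅ i, R i := by
      rw [Subring.mem_iInf]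
      intro i
      have h1 : t = (∏ j ∈ Finset.univ.erase i, s j) * s i := by
        rw [ht, Finset.prod_erase_mul _ _ (Finset.mem_univ i)]
      rw [h1, show ((((∏ j ∈ Finset.univ.erase i, s j) * s i : S)) : F)
          = (((∏ j ∈ Finset.univ.erase i, s j : S)) : F) * ((s i : F)) from rfl,
        ← smul_smul]
      exact key i _ _ (hsR i)
    have : a = ((t : F))⁻¹ • (((t : F)) • a) := by
      rw [smul_smul, inv_mul_cancel₀ ht0, one_smul]
    rw [this]
    exact Submodule.smul_mem _ _ (Submodule.subset_span htR)
end

section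
/- Let U be an upper set in 𝕊 with V(⋂_{R∈U} R) ⊆ U. Then U is closed under finite nonempty intersections, i.e., for any R1, R2 ∈ U, R1 ∩ R2 ∈ U. -/
lemma nice_smul_mem {F A : Type*} [Field F] [Ring A] [Algebra F A] {S : Subring F}
    {R : Subring A} (hR : IsNice S R) (s : S) {x : A} (hx : x ∈ R) :
    (s : F) • x ∈ R := by
  rw [Algebra.smul_def]
  exact R.mul_mem ((hR.1 _).2 s.2) hx

lemma nice_denom {F A : Type*} [Field F] [Ring A] [Algebra F A] (S : Subring F)
    [IsFractionRing S F] {R : Subring A} (hR : IsNice S R) (a : A) :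
    ∃ t : S, t ≠ 0 ∧ (t : F) • a ∈ R := by
  have ha : a ∈ Submodule.span F (R : Set A) := by rw [hR.2]; trivial
  induction ha using Submodule.span_induction with
  | mem x hx => exact ⟨1, one_ne_zero, by simpa using hx⟩
  | zero => exact ⟨1, one_ne_zero, by simpa using R.zero_mem⟩
  | add x y _ _ hx hy =>
    obtain ⟨t, ht, htx⟩ := hx
    obtain ⟨u, hu, huy⟩ := hy
    refine ⟨t * u, mul_ne_zero ht hu, ?_⟩
    push_cast
    rw [smul_add]
    refine R.add_mem ?_ ?_
    · rw [mul_comm, mul_smul]; exact nice_smul_mem hR u htx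
    · rw [mul_smul]; exact nice_smul_mem hR t huy
  | smul c x _ hx =>
    obtain ⟨t, ht, htx⟩ := hx
    obtain ⟨s, u, hu0, hcu⟩ := IsFractionRing.div_surjective (A := S) c
    have hu : u ≠ 0 := nonZeroDivisors.ne_zero hu0
    have huF : (u : F) ≠ 0 := fun h => hu (Subtype.ext (by exact_mod_cast h))
    refine ⟨u * t, mul_ne_zero hu ht, ?_⟩
    have hceq : (u : F) * c = (s : F) := by
      have : algebraMap S F u = (u : F) := rfl
      rw [← hcu, this, mul_div_cancel₀ _ huF]
      rfl
    push_cast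
    rw [smul_smul, mul_right_comm, hceq, mul_smul]
    exact nice_smul_mem hR s htx

theorem stmt8 {F A : Type*} [Field F] [Ring A] [Algebra F A] (S : Subring F)
    [IsFractionRing S F]
    (U : Set (Subring A)) (hUnice : ∀ R ∈ U, IsNice S R)
    (hupper : ∀ R ∈ U, ∀ R' : Subring A, IsNice S R' → R ≤ R' → R' ∈ U)
    (hV : ∀ R : Subring A, IsNice S R → sInf U ≤ R → R ∈ U) :
    ∀ R1 ∈ U, ∀ R2 ∈ U, R1 ⊓ R2 ∈ U := by
  intro R1 hR1 R2 hR2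
  have h1 := hUnice R1 hR1
  have h2 := hUnice R2 hR2
  have hnice : IsNice S (R1 ⊓ R2) := by
    constructor
    · intro x
      constructor
      · intro hx
        exact (h1.1 x).1 hx.1
      · intro hx
        exact ⟨(h1.1 x).2 hx, (h2.1 x).2 hx⟩
    · rw [eq_top_iff]
      intro a _
      obtain ⟨t1, ht1, hta1⟩ := nice_denom S h1 a
      obtain ⟨t2, ht2, hta2⟩ := nice_denom S h2 a
      have hmem : ((t1 * t2 : S) : F) • a ∈ R1 ⊓ R2 := by
        constructor
        · push_cast
          rw [mul_comm, mul_smul]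
          exact nice_smul_mem h1 t2 hta1
        · push_cast
          rw [mul_smul]
          exact nice_smul_mem h2 t1 hta2
      have htF : ((t1 * t2 : S) : F) ≠ 0 := by
        simpa using fun h => (mul_ne_zero ht1 ht2) (Subtype.ext h)
      have : a = ((t1 * t2 : S) : F)⁻¹ • (((t1 * t2 : S) : F) • a) := by
        rw [← mul_smul, inv_mul_cancel₀ htF, one_smul]
      rw [this]
      exact Submodule.smul_mem _ _ (Submodule.subset_span hmem)
  exact hV _ hnice (le_inf (sInf_le hR1) (sInf_le hR2))
end

section
/- Let H be a nonempty set of S-nice subalgebras of A. Then H has an upper bound in 𝕊 if and only if H has a supremum in 𝕊. -/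
theorem stmt11 {F A : Type*} [Field F] [Ring A] [Algebra F A] (S : Subring F)
    [IsFractionRing S F]
    (H : Set (Subring A)) (hne : H.Nonempty) (hH : ∀ R ∈ H, IsNice S R) :
    (∃ R0 : Subring A, IsNice S R0 ∧ ∀ R ∈ H, R ≤ R0) ↔
      (∃ R0 : Subring A, IsNice S R0 ∧ (∀ R ∈ H, R ≤ R0) ∧
        ∀ R' : Subring A, IsNice S R' → (∀ R ∈ H, R ≤ R') → R0 ≤ R') := by
  constructor
  · rintro ⟨R0, hR0, hub⟩
    obtain ⟨R1, hR1⟩ := hne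
    have hR1nice := hH R1 hR1
    set T := sSup H with hT
    have hle : ∀ R ∈ H, R ≤ T := fun R hR => le_sSup hR
    have hTR0 : T ≤ R0 := sSup_le hub
    refine ⟨T, ⟨fun x => ?_, ?_⟩, hle, fun R' _ h => sSup_le h⟩
    · constructor
      · intro hx
        exact (hR0.1 x).mp (hTR0 hx)
      · intro hx
        exact hle R1 hR1 ((hR1nice.1 x).mpr hx)
    · refine top_le_iff.mp ?_
      rw [← hR1nice.2]
      exact Submodule.span_mono (hle R1 hR1)
  · rintro ⟨R0, hR0, hub, _⟩
    exact ⟨R0, hR0, hub⟩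
end

section
/- If I is an irreducible subset of 𝕊 (with the Alexandroff topology whose open sets are the upper sets), then ⋃_{R∈I} R is an S-nice subalgebra of A, and it equals the supremum of I in 𝕊. -/
/-- A closed set of the Alexandroff topology on the poset 𝕊 of `S`-nice subalgebras of `A`:
a lower subset of 𝕊. -/
def IsNiceClosed {F A : Type*} [Field F] [Ring A] [Algebra F A] (S : Subring F)
    (G : Set (Subring A)) : Prop :=
  (∀ R ∈ G, IsNice S R) ∧ ∀ R ∈ G, ∀ R' : Subring A, IsNice S R' → R' ≤ R → R' ∈ G

theorem stmt12 {F A : Type*} [Field F] [Ring A] [Algebra F A] (S : Subring F)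
    [IsFractionRing S F]
    (I : Set (Subring A)) (hInice : ∀ R ∈ I, IsNice S R) (hne : I.Nonempty)
    (hirr : ∀ G1 G2 : Set (Subring A), IsNiceClosed S G1 → IsNiceClosed S G2 →
      I ⊆ G1 ∪ G2 → I ⊆ G1 ∨ I ⊆ G2) :
    ∃ R0 : Subring A, IsNice S R0 ∧ (R0 : Set A) = (⋃ R ∈ I, (R : Set A)) ∧
      (∀ R ∈ I, R ≤ R0) ∧
      ∀ R' : Subring A, IsNice S R' → (∀ R ∈ I, R ≤ R') → R0 ≤ R' := by
  -- I is directed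
  have hdir : ∀ R1 ∈ I, ∀ R2 ∈ I, ∃ R ∈ I, R1 ≤ R ∧ R2 ≤ R := by
    intro R1 h1 R2 h2
    by_contra hc
    push_neg at hc
    set G1 : Set (Subring A) := {R | IsNice S R ∧ ¬ R1 ≤ R} with hG1
    set G2 : Set (Subring A) := {R | IsNice S R ∧ ¬ R2 ≤ R} with hG2
    have c1 : IsNiceClosed S G1 := by
      constructor
      · intro R hR; exact hR.1
      · intro R hR R' hR' hle
        exact ⟨hR', fun h => hR.2 (h.trans hle)⟩
    have c2 : IsNiceClosed S G2 := by
      constructor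
      · intro R hR; exact hR.1
      · intro R hR R' hR' hle
        exact ⟨hR', fun h => hR.2 (h.trans hle)⟩
    have hsub : I ⊆ G1 ∪ G2 := by
      intro R hR
      by_cases h : R1 ≤ R
      · right; exact ⟨hInice R hR, fun h2' => hc R hR h h2'⟩
      · left; exact ⟨hInice R hR, h⟩
    rcases hirr G1 G2 c1 c2 hsub with h | h
    · exact (h h1).2 le_rfl
    · exact (h h2).2 le_rfl
  have hd : Directed (· ≤ ·) (fun R : I => (R : Subring A)) := by
    rintro ⟨R1, h1⟩ ⟨R2, h2⟩
    obtain ⟨R, hR, hle1, hle2⟩ := hdir R1 h1 R2 h2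
    exact ⟨⟨R, hR⟩, hle1, hle2⟩
  obtain ⟨Rw, hRw⟩ := hne
  have hneI : Nonempty I := ⟨⟨Rw, hRw⟩⟩
  set R0 : Subring A := ⨆ R : I, (R : Subring A) with hR0
  have hcoe : (R0 : Set A) = ⋃ R ∈ I, (R : Set A) := by
    rw [hR0, Subring.coe_iSup_of_directed hd]
    ext x
    simp only [Set.mem_iUnion]
    constructor
    · rintro ⟨⟨R, hR⟩, hx⟩; exact ⟨R, hR, hx⟩
    · rintro ⟨R, hR, hx⟩; exact ⟨⟨R, hR⟩, hx⟩
  have hmem : ∀ x : A, x ∈ R0 ↔ ∃ R ∈ I, x ∈ R := by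
    intro x
    rw [hR0, Subring.mem_iSup_of_directed hd]
    constructor
    · rintro ⟨⟨R, hR⟩, hx⟩; exact ⟨R, hR, hx⟩
    · rintro ⟨R, hR, hx⟩; exact ⟨⟨R, hR⟩, hx⟩
  have hle : ∀ R ∈ I, R ≤ R0 := by
    intro R hR x hx
    exact (hmem x).2 ⟨R, hR, hx⟩
  have hnice : IsNice S R0 := by
    constructor
    · intro x
      constructor
      · intro hx
        obtain ⟨R, hR, hxR⟩ := (hmem _).1 hx
        exact ((hInice R hR).1 x).1 hxR
      · intro hx
        exact hle Rw hRw (((hInice Rw hRw).1 x).2 hx)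
    · refine top_le_iff.1 ?_
      rw [← (hInice Rw hRw).2]
      exact Submodule.span_mono (hle Rw hRw)
  exact ⟨R0, hnice, hcoe, hle, fun R' _ h => iSup_le fun ⟨R, hR⟩ => h R hR⟩
end

section
/- Let U be a nonempty open (upper) set in 𝕊. Then U has a unique maximal element if and only if every pair of elements of U has a supremum in 𝕊 lying in U (i.e., U is a sup-subsemilattice of 𝕊). -/
/-- Every element of `U` lies below a maximal element of `U`. -/
lemma exists_maximal_above {F A : Type*} [Field F] [Ring A] [Algebra F A] (S : Subring F)
    (U : Set (Subring A)) (hUnice : ∀ R ∈ U, IsNice S R)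
    (hupper : ∀ R ∈ U, ∀ R' : Subring A, IsNice S R' → R ≤ R' → R' ∈ U)
    (R : Subring A) (hR : R ∈ U) :
    ∃ M, R ≤ M ∧ M ∈ U ∧ ∀ R' ∈ U, M ≤ R' → R' = M := by
  have hchaincond : ∀ c ⊆ U, IsChain (· ≤ ·) c → ∀ y ∈ c,
      ∃ ub ∈ U, ∀ z ∈ c, z ≤ ub := by
    intro c hcU hchain y hy
    refine ⟨sSup c, ?_, fun z hz => le_sSup hz⟩
    have hdir : DirectedOn (· ≤ ·) c := hchain.directedOn
    have hne : c.Nonempty := ⟨y, hy⟩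
    have hnice : IsNice S (sSup c) := by
      constructor
      · intro x
        constructor
        · intro hx
          obtain ⟨s, hs, hxs⟩ := (Subring.mem_sSup_of_directedOn hne hdir).1 hx
          exact ((hUnice s (hcU hs)).1 x).1 hxs
        · intro hx
          exact SetLike.le_def.1 (le_sSup hy) (((hUnice y (hcU hy)).1 x).2 hx)
      · refine top_le_iff.1 ?_
        rw [← (hUnice y (hcU hy)).2]
        exact Submodule.span_mono (SetLike.coe_subset_coe.2 (le_sSup hy))
    exact hupper y (hcU hy) _ hnice (le_sSup hy)
  obtain ⟨M, hRM, hMU, hMmax⟩ := zorn_le_nonempty₀ U hchaincond R hR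
  exact ⟨M, hRM, hMU, fun R' hR' hle => (hMmax hR' hle).antisymm hle⟩

theorem stmt14 {F A : Type*} [Field F] [Ring A] [Algebra F A] (S : Subring F)
    [IsFractionRing S F]
    (U : Set (Subring A)) (hUnice : ∀ R ∈ U, IsNice S R) (hne : U.Nonempty)
    (hupper : ∀ R ∈ U, ∀ R' : Subring A, IsNice S R' → R ≤ R' → R' ∈ U) :
    (∃ R0 ∈ U, (∀ R ∈ U, R0 ≤ R → R = R0) ∧
        ∀ R1 ∈ U, (∀ R ∈ U, R1 ≤ R → R = R1) → R1 = R0) ↔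
      (∀ R1 ∈ U, ∀ R2 ∈ U, ∃ R3 ∈ U, R1 ≤ R3 ∧ R2 ≤ R3 ∧
        ∀ R' : Subring A, IsNice S R' → R1 ≤ R' → R2 ≤ R' → R3 ≤ R') := by
  constructor
  · rintro ⟨R0, hR0U, hR0max, hR0uniq⟩ R1 hR1 R2 hR2
    -- R0 is in fact a maximum of U
    have hmax : ∀ R ∈ U, R ≤ R0 := by
      intro R hR
      obtain ⟨M, hRM, hMU, hMmax⟩ := exists_maximal_above S U hUnice hupper R hR
      exact (hR0uniq M hMU hMmax) ▸ hRM
    have h1 : R1 ≤ R0 := hmax R1 hR1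
    have h2 : R2 ≤ R0 := hmax R2 hR2
    have hnice : IsNice S (R1 ⊔ R2) := by
      constructor
      · intro x
        constructor
        · intro hx
          exact ((hUnice R0 hR0U).1 x).1 (SetLike.le_def.1 (sup_le h1 h2) hx)
        · intro hx
          exact SetLike.le_def.1 le_sup_left (((hUnice R1 hR1).1 x).2 hx)
      · refine top_le_iff.1 ?_
        rw [← (hUnice R1 hR1).2]
        exact Submodule.span_mono (SetLike.coe_subset_coe.2 le_sup_left)
    exact ⟨R1 ⊔ R2, hupper R1 hR1 _ hnice le_sup_left, le_sup_left, le_sup_right,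
      fun R' _ h1' h2' => sup_le h1' h2'⟩
  · intro hsup
    obtain ⟨R, hR⟩ := hne
    obtain ⟨M, _, hMU, hMmax⟩ := exists_maximal_above S U hUnice hupper R hR
    refine ⟨M, hMU, hMmax, fun R1 hR1 hR1max => ?_⟩
    obtain ⟨R3, hR3U, h13, h23, _⟩ := hsup R1 hR1 M hMU
    have e1 : R3 = R1 := hR1max R3 hR3U h13
    have e2 : R3 = M := hMmax R3 hR3U h23
    rw [← e1, e2]
end

section
/- Let U be a nonempty open (upper) set in 𝕊 such that every two elements of U have a supremum in 𝕊 belonging to U. Then every nonempty subset H ⊆ U has a supremum in 𝕊. -/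
theorem stmt15 {F A : Type*} [Field F] [Ring A] [Algebra F A] (S : Subring F)
    [IsFractionRing S F]
    (U : Set (Subring A)) (hUnice : ∀ R ∈ U, IsNice S R) (hne : U.Nonempty)
    (hupper : ∀ R ∈ U, ∀ R' : Subring A, IsNice S R' → R ≤ R' → R' ∈ U)
    (hsup : ∀ R1 ∈ U, ∀ R2 ∈ U, ∃ R3 ∈ U, R1 ≤ R3 ∧ R2 ≤ R3 ∧
      ∀ R' : Subring A, IsNice S R' → R1 ≤ R' → R2 ≤ R' → R3 ≤ R') :
    ∀ H ⊆ U, H.Nonempty →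
      ∃ R0 : Subring A, IsNice S R0 ∧ (∀ R ∈ H, R ≤ R0) ∧
        ∀ R' : Subring A, IsNice S R' → (∀ R ∈ H, R ≤ R') → R0 ≤ R' := by
  intro H hHU hHne
  obtain ⟨R1, hR1H⟩ := hHne
  set R0 : Subring A := Subring.closure (⋃ R ∈ H, (R : Set A)) with hR0def
  have hub : ∀ R ∈ H, R ≤ R0 := by
    intro R hR x hx
    exact Subring.subset_closure (Set.mem_biUnion hR hx)
  -- R0 is contained in the directed union of U
  haveI : Nonempty U := ⟨⟨R1, hHU hR1H⟩⟩
  have hdir : Directed (· ≤ ·) (fun i : U => (i : Subring A)) := by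
    rintro ⟨a, ha⟩ ⟨b, hb⟩
    obtain ⟨c, hc, hac, hbc, -⟩ := hsup a ha b hb
    exact ⟨⟨c, hc⟩, hac, hbc⟩
  have hle : R0 ≤ ⨆ i : U, (i : Subring A) := by
    apply Subring.closure_le.mpr
    intro x hx
    obtain ⟨R, hRH, hxR⟩ := Set.mem_iUnion₂.mp hx
    exact (le_iSup (fun i : U => (i : Subring A)) ⟨R, hHU hRH⟩ : _) hxR
  refine ⟨R0, ⟨?_, ?_⟩, hub, ?_⟩
  · intro x
    constructor
    · intro hx
      obtain ⟨⟨R, hRU⟩, hxR⟩ := (Subring.mem_iSup_of_directed hdir).mp (hle hx)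
      exact ((hUnice R hRU).1 x).mp hxR
    · intro hx
      exact hub R1 hR1H (((hUnice R1 (hHU hR1H)).1 x).mpr hx)
  · have := (hUnice R1 (hHU hR1H)).2
    refine top_unique ?_
    rw [← this]
    exact Submodule.span_mono (hub R1 hR1H)
  · intro R' _ hR'
    apply Subring.closure_le.mpr
    intro x hx
    obtain ⟨R, hRH, hxR⟩ := Set.mem_iUnion₂.mp hx
    exact hR' R hRH hxR
end
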